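/- arXiv:1506.00588 — 5 statements merged into one kernel-verified Lean document; each statement's English description precedes it below -/
import Mathlib

section
/- (Popa's transversality inequality.) Let (α, β) be an s-malleable deformation of M ⊆ Ã and set δ_t(x) = α_t(x) − E(α_t(x)). Then for all x ∈ M and all t ∈ ℝ: ‖δ_{2t}(x)‖₂ ≤ 2‖α_{2t}(x) − x‖₂ ≤ 4‖δ_t(x)‖₂. -/
open scoped ComplexOrder
open Filter

/-- The 2-norm `‖x‖₂ = (τ(x*x))^{1/2}` associated to a tracial state `τ`. -/
noncomputable def traceNorm2 {A : Type*} [Ring A] [StarRing A] [Algebra ℂ A]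
    (τ : A →ₗ[ℂ] ℂ) (x : A) : ℝ :=
  Real.sqrt (τ (star x * x)).re

/-- **Popa's transversality inequality.**  Let `(α, β)` be an s-malleable deformation of
`M ⊆ Ã` and set `δ_t(x) = α_t(x) − E(α_t(x))`.  Then for all `x ∈ M` and all `t ∈ ℝ`:
`‖δ_{2t}(x)‖₂ ≤ 2‖α_{2t}(x) − x‖₂ ≤ 4‖δ_t(x)‖₂`. -/
theorem popa_transversality
    {A : Type*} [NormedRing A] [StarRing A] [CStarRing A] [NormedAlgebra ℂ A]
    [StarModule ℂ A] [CompleteSpace A]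
    -- τ is a faithful tracial state on Ã
    (τ : A →ₗ[ℂ] ℂ)
    (hτ1 : τ 1 = 1)
    (hτpos : ∀ x : A, 0 ≤ τ (star x * x))
    (hτfaithful : ∀ x : A, τ (star x * x) = 0 → x = 0)
    (hτtrace : ∀ x y : A, τ (x * y) = τ (y * x))
    -- M is a unital C*-subalgebra of Ã
    (M : StarSubalgebra ℂ A) (hMclosed : IsClosed (M : Set A))
    -- E is a conditional expectation onto M
    (E : A →ₗ[ℂ] A)
    (hErange : ∀ x : A, E x ∈ M)
    (hEid : ∀ x ∈ M, E x = x)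
    (hEbimod : ∀ a ∈ M, ∀ b ∈ M, ∀ x : A, E (a * x * b) = a * E x * b)
    (hEstar : ∀ x : A, E (star x) = star (E x))
    (hEτ : ∀ x : A, τ (E x) = τ x)
    -- α : ℝ → Aut(Ã) is a trace-preserving one-parameter group of *-automorphisms
    (α : ℝ → A ≃⋆ₐ[ℂ] A)
    (hα_zero : ∀ x : A, α 0 x = x)
    (hα_add : ∀ s t : ℝ, ∀ x : A, α (s + t) x = α s (α t x))
    (hατ : ∀ t : ℝ, ∀ x : A, τ (α t x) = τ x)
    -- β is a trace-preserving *-automorphism making the deformation s-malleable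
    (β : A ≃⋆ₐ[ℂ] A)
    (hβτ : ∀ x : A, τ (β x) = τ x)
    (hβM : ∀ x ∈ M, β x = x)
    (hββ : ∀ x : A, β (β x) = x)
    (hβα : ∀ t : ℝ, ∀ x : A, β (α t x) = α (-t) (β x)) :
    ∀ x ∈ M, ∀ t : ℝ,
      traceNorm2 τ (α (2 * t) x - E (α (2 * t) x)) ≤ 2 * traceNorm2 τ (α (2 * t) x - x) ∧
      2 * traceNorm2 τ (α (2 * t) x - x) ≤ 4 * traceNorm2 τ (α t x - E (α t x)) := by
  intro x hx t
  set Q : A → ℝ := fun y => (τ (star y * y)).re with hQ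
  have hQnonneg : ∀ y, 0 ≤ Q y := by
    intro y
    have h := hτpos y
    rw [Complex.le_def] at h
    simpa using h.1
  have hnorm : ∀ y, traceNorm2 τ y = Real.sqrt (Q y) := fun y => rfl
  have hE1 : (1 : A) ∈ M := one_mem M
  -- cross terms
  have h1 : ∀ z : A, τ (star (E z) * z) = τ (star (E z) * E z) := by
    intro z
    have hb : E (star (E z) * z * 1) = star (E z) * E z * 1 :=
      hEbimod _ (star_mem (hErange z)) _ hE1 z
    rw [mul_one, mul_one] at hb
    rw [← hEτ (star (E z) * z), hb]
  have h2 : ∀ z : A, τ (star z * E z) = τ (star (E z) * E z) := by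
    intro z
    rw [hτtrace, ← hEτ (E z * star z)]
    have hb : E (E z * star z * 1) = E z * E (star z) * 1 :=
      hEbimod _ (hErange z) _ hE1 (star z)
    rw [mul_one, mul_one] at hb
    rw [hb, hEstar, hτtrace]
  -- Pythagoras
  have key_proj : ∀ z : A, Q (z - E z) ≤ Q z := by
    intro z
    have expand : star (z - E z) * (z - E z)
        = star z * z - star z * E z - star (E z) * z + star (E z) * E z := by
      rw [star_sub]; noncomm_ring
    have : τ (star (z - E z) * (z - E z)) = τ (star z * z) - τ (star (E z) * E z) := by
      rw [expand, map_add, map_sub, map_sub, h1 z, h2 z]; ring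
    have hre : Q (z - E z) = Q z - Q (E z) := by
      simp only [hQ, this, Complex.sub_re]
    rw [hre]
    have := hQnonneg (E z)
    linarith
  -- invariance of Q under star-algebra automorphisms preserving τ
  have hQα : ∀ s : ℝ, ∀ y : A, Q (α s y) = Q y := by
    intro s y
    have : star (α s y) * α s y = α s (star y * y) := by
      rw [map_mul, map_star]
    simp only [hQ, this, hατ]
  have hQβ : ∀ y : A, Q (β y) = Q y := by
    intro y
    have : star (β y) * β y = β (star y * y) := by
      rw [map_mul, map_star]
    simp only [hQ, this, hβτ]
  constructor
  · -- first inequality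
    have hEx : E x = x := hEid x hx
    have hz : α (2 * t) x - E (α (2 * t) x)
        = (α (2 * t) x - x) - E (α (2 * t) x - x) := by
      rw [map_sub, hEx]; abel
    rw [hnorm, hnorm, hz]
    have h1' := key_proj (α (2 * t) x - x)
    have h2' : Real.sqrt (Q ((α (2 * t) x - x) - E (α (2 * t) x - x)))
        ≤ Real.sqrt (Q (α (2 * t) x - x)) := Real.sqrt_le_sqrt h1'
    have h3' : (0:ℝ) ≤ Real.sqrt (Q (α (2 * t) x - x)) := Real.sqrt_nonneg _
    linarith
  · -- second inequality
    set a : A := α t x - E (α t x) with ha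
    set b : A := β a with hb
    -- identity : α t (a - b) = α (2*t) x - x
    have hβE : β (E (α t x)) = E (α t x) := hβM _ (hErange _)
    have hβat : β (α t x) = α (-t) x := by
      rw [hβα, hβM x hx]
    have hab : a - b = α t x - α (-t) x := by
      rw [hb, ha, map_sub, hβE, hβat]; abel
    have hid : α t (a - b) = α (2 * t) x - x := by
      rw [hab, map_sub, ← hα_add t t, ← hα_add t (-t)]
      norm_num [hα_zero, two_mul]
    -- parallelogram identity
    have hpar : star (a - b) * (a - b) + star (a + b) * (a + b)
        = 2 * (star a * a) + 2 * (star b * b) := by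
      rw [star_sub, star_add]; noncomm_ring
    have hQpar : Q (a - b) + Q (a + b) = 2 * Q a + 2 * Q b := by
      have h := congrArg τ hpar
      have e2 : ∀ y : A, τ (2 * y) = τ y + τ y := by
        intro y
        rw [two_mul y, map_add]
      rw [map_add, map_add, e2, e2] at h
      have h' := congrArg Complex.re h
      simp only [Complex.add_re] at h'
      simp only [hQ] at *
      linarith
    have hQb : Q b = Q a := hQβ a
    have hQab : Q (a - b) ≤ 4 * Q a := by
      have := hQnonneg (a + b)
      rw [hQb] at hQpar
      linarith
    rw [hnorm, hnorm]
    have hkey : Q (α (2 * t) x - x) = Q (a - b) := by rw [← hid, hQα]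
    rw [hkey]
    have hs : Real.sqrt (Q (a - b)) ≤ 2 * Real.sqrt (Q a) := by
      have h4 : Real.sqrt (Q (a - b)) ≤ Real.sqrt (4 * Q a) := Real.sqrt_le_sqrt hQab
      have h5 : Real.sqrt (4 * Q a) = 2 * Real.sqrt (Q a) := by
        rw [show (4:ℝ) = 2^2 by norm_num, Real.sqrt_mul (by positivity) (Q a),
          Real.sqrt_sq (by norm_num)]
      linarith
    linarith
end

section
/- Let (α, β) be an s-malleable deformation of M ⊆ Ã and set δ_t(x) = α_t(x) − E(α_t(x)). Then for all x, y ∈ M and all t ∈ ℝ: ‖δ_t(x)y − yδ_t(x)‖₂ ≤ 2‖x‖·‖α_t(y) − y‖₂ + ‖xy − yx‖₂. -/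
open scoped ComplexOrder

section Tracial

variable {A : Type*} [Ring A] [StarRing A] [Algebra ℂ A] {τ : A →ₗ[ℂ] ℂ}

theorem traceNorm2_star (hτtrace : ∀ x y : A, τ (x * y) = τ (y * x)) (x : A) :
    traceNorm2 τ (star x) = traceNorm2 τ x := by
  rw [traceNorm2, traceNorm2, star_star, hτtrace]

theorem traceNorm2_map {F : Type*} [FunLike F A A] [MulHomClass F A A] [StarHomClass F A A]
    (φ : F) (hφ : ∀ x, τ (φ x) = τ x) (x : A) : traceNorm2 τ (φ x) = traceNorm2 τ x := by
  rw [traceNorm2, traceNorm2, ← map_star, ← map_mul, hφ]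

end Tracial

section Positive

variable {A : Type*} [CStarAlgebra A] [PartialOrder A] [StarOrderedRing A] {τ : A →ₗ[ℂ] ℂ}

noncomputable def PositiveLinearMap.ofStarMulSelfNonneg (hτpos : ∀ x : A, 0 ≤ τ (star x * x)) :
    A →ₚ[ℂ] ℂ :=
  PositiveLinearMap.mk₀ τ fun _ hx ↦ by
    obtain ⟨y, rfl⟩ := CStarAlgebra.nonneg_iff_eq_star_mul_self.mp hx
    exact hτpos y

theorem traceNorm2_eq_norm_toPreGNS (hτpos : ∀ x : A, 0 ≤ τ (star x * x)) (x : A) :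
    traceNorm2 τ x = ‖(PositiveLinearMap.ofStarMulSelfNonneg hτpos).toPreGNS x‖ :=
  rfl

theorem traceNorm2_add_le (hτpos : ∀ x : A, 0 ≤ τ (star x * x)) (x y : A) :
    traceNorm2 τ (x + y) ≤ traceNorm2 τ x + traceNorm2 τ y := by
  simp only [traceNorm2_eq_norm_toPreGNS hτpos, map_add]
  exact norm_add_le _ _

theorem traceNorm2_sub_le (hτpos : ∀ x : A, 0 ≤ τ (star x * x)) (x y : A) :
    traceNorm2 τ (x - y) ≤ traceNorm2 τ x + traceNorm2 τ y := by
  simp only [traceNorm2_eq_norm_toPreGNS hτpos, map_sub]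
  exact norm_sub_le _ _

theorem traceNorm2_mul_le_norm_mul_traceNorm2 (hτpos : ∀ x : A, 0 ≤ τ (star x * x)) (a x : A) :
    traceNorm2 τ (a * x) ≤ ‖a‖ * traceNorm2 τ x := by
  simp only [traceNorm2_eq_norm_toPreGNS hτpos]
  exact ((PositiveLinearMap.ofStarMulSelfNonneg hτpos).leftMulMapPreGNS a).le_of_opNorm_le
    (LinearMap.mkContinuous_norm_le _ (norm_nonneg a) _) _

theorem traceNorm2_mul_le_traceNorm2_mul_norm (hτpos : ∀ x : A, 0 ≤ τ (star x * x))
    (hτtrace : ∀ x y : A, τ (x * y) = τ (y * x)) (x a : A) :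
    traceNorm2 τ (x * a) ≤ traceNorm2 τ x * ‖a‖ := by
  rw [← traceNorm2_star hτtrace, star_mul, ← traceNorm2_star hτtrace x, ← norm_star a, mul_comm]
  exact traceNorm2_mul_le_norm_mul_traceNorm2 hτpos _ _

theorem traceNorm2_sub_condExp_le (hτpos : ∀ x : A, 0 ≤ τ (star x * x))
    (M : StarSubalgebra ℂ A) (E : A →ₗ[ℂ] A) (hErange : ∀ x, E x ∈ M) (hEid : ∀ x ∈ M, E x = x)
    (hEleft : ∀ a ∈ M, ∀ x, E (a * x) = a * E x) (hEτ : ∀ x, τ (E x) = τ x) (x : A) :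
    traceNorm2 τ (x - E x) ≤ traceNorm2 τ x := by
  set f := PositiveLinearMap.ofStarMulSelfNonneg hτpos
  have horth : inner ℂ (f.toPreGNS (E x)) (f.toPreGNS (x - E x)) = 0 := by
    change τ (star (E x) * (x - E x)) = 0
    rw [← hEτ, hEleft _ (star_mem (hErange x)), map_sub, hEid _ (hErange x), sub_self, mul_zero,
      map_zero]
  have hpyth := norm_add_sq_eq_norm_sq_add_norm_sq_of_inner_eq_zero _ _ horth
  rw [← map_add, add_sub_cancel] at hpyth
  change ‖f.toPreGNS (x - E x)‖ ≤ ‖f.toPreGNS x‖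
  rw [mul_self_le_mul_self_iff (norm_nonneg _) (norm_nonneg _), hpyth]
  exact le_add_of_nonneg_left (mul_self_nonneg _)

end Positive

theorem malleable_commutator_estimate_general
    {A : Type*} [NormedRing A] [StarRing A] [CStarRing A] [NormedAlgebra ℂ A]
    [StarModule ℂ A] [CompleteSpace A]
    -- τ is a faithful tracial state on Ã
    (τ : A →ₗ[ℂ] ℂ)
    (hτpos : ∀ x : A, 0 ≤ τ (star x * x))
    (hτtrace : ∀ x y : A, τ (x * y) = τ (y * x))
    -- M is a unital C*-subalgebra of Ã
    (M : StarSubalgebra ℂ A)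
    -- E is a conditional expectation onto M
    (E : A →ₗ[ℂ] A)
    (hErange : ∀ x : A, E x ∈ M)
    (hEid : ∀ x ∈ M, E x = x)
    (hEbimod : ∀ a ∈ M, ∀ b ∈ M, ∀ x : A, E (a * x * b) = a * E x * b)
    (hEτ : ∀ x : A, τ (E x) = τ x)
    -- α : ℝ → Aut(Ã) is a trace-preserving one-parameter group of *-automorphisms
    (α : ℝ → A ≃⋆ₐ[ℂ] A)
    (hατ : ∀ t : ℝ, ∀ x : A, τ (α t x) = τ x) :
    ∀ x ∈ M, ∀ y ∈ M, ∀ t : ℝ,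
      traceNorm2 τ ((α t x - E (α t x)) * y - y * (α t x - E (α t x))) ≤
        2 * ‖x‖ * traceNorm2 τ (α t y - y) + traceNorm2 τ (x * y - y * x) := by
  let : CStarAlgebra A := {}
  let : PartialOrder A := CStarAlgebra.spectralOrder A
  have : StarOrderedRing A := CStarAlgebra.spectralOrderedRing A
  have hEleft : ∀ a ∈ M, ∀ x, E (a * x) = a * E x := fun a ha x ↦ by
    simpa using hEbimod a ha 1 (one_mem M) x
  have hEright : ∀ b ∈ M, ∀ x, E (x * b) = E x * b := fun b hb x ↦ by
    simpa using hEbimod 1 (one_mem M) b hb x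
  intro x _ y hy t
  set u := α t x
  set d := α t y - y
  have hδ : (u - E u) * y - y * (u - E u) = (u * y - y * u) - E (u * y - y * u) := by
    rw [map_sub, hEright y hy, hEleft y hy]
    noncomm_ring
  have hcomm : u * y - y * u = d * u - u * d + α t (x * y - y * x) := by
    simp only [d, u, map_sub, map_mul]
    noncomm_ring
  have hu : ‖u‖ = ‖x‖ := StarAlgEquiv.norm_map (α t) x
  rw [hδ]
  calc traceNorm2 τ ((u * y - y * u) - E (u * y - y * u))
      ≤ traceNorm2 τ (u * y - y * u) :=
        traceNorm2_sub_condExp_le hτpos M E hErange hEid hEleft hEτ _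
    _ ≤ traceNorm2 τ (d * u) + traceNorm2 τ (u * d) + traceNorm2 τ (α t (x * y - y * x)) := by
      rw [hcomm]
      linarith [traceNorm2_add_le hτpos (d * u - u * d) (α t (x * y - y * x)),
        traceNorm2_sub_le hτpos (d * u) (u * d)]
    _ ≤ 2 * ‖x‖ * traceNorm2 τ d + traceNorm2 τ (x * y - y * x) := by
      rw [traceNorm2_map (α t) (hατ t), ← hu]
      linarith [traceNorm2_mul_le_traceNorm2_mul_norm hτpos hτtrace d u,
        traceNorm2_mul_le_norm_mul_traceNorm2 hτpos u d]

/-- Let `(α, β)` be an s-malleable deformation of `M ⊆ Ã` and set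
`δ_t(x) = α_t(x) − E(α_t(x))`.  Then for all `x, y ∈ M` and all `t ∈ ℝ`:
`‖δ_t(x)y − yδ_t(x)‖₂ ≤ 2‖x‖·‖α_t(y) − y‖₂ + ‖xy − yx‖₂`. -/
theorem malleable_commutator_estimate
    {A : Type*} [NormedRing A] [StarRing A] [CStarRing A] [NormedAlgebra ℂ A]
    [StarModule ℂ A] [CompleteSpace A]
    -- τ is a faithful tracial state on Ã
    (τ : A →ₗ[ℂ] ℂ)
    (hτ1 : τ 1 = 1)
    (hτpos : ∀ x : A, 0 ≤ τ (star x * x))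
    (hτfaithful : ∀ x : A, τ (star x * x) = 0 → x = 0)
    (hτtrace : ∀ x y : A, τ (x * y) = τ (y * x))
    -- M is a unital C*-subalgebra of Ã
    (M : StarSubalgebra ℂ A) (hMclosed : IsClosed (M : Set A))
    -- E is a conditional expectation onto M
    (E : A →ₗ[ℂ] A)
    (hErange : ∀ x : A, E x ∈ M)
    (hEid : ∀ x ∈ M, E x = x)
    (hEbimod : ∀ a ∈ M, ∀ b ∈ M, ∀ x : A, E (a * x * b) = a * E x * b)
    (hEstar : ∀ x : A, E (star x) = star (E x))
    (hEτ : ∀ x : A, τ (E x) = τ x)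
    -- α : ℝ → Aut(Ã) is a trace-preserving one-parameter group of *-automorphisms
    (α : ℝ → A ≃⋆ₐ[ℂ] A)
    (hα_zero : ∀ x : A, α 0 x = x)
    (hα_add : ∀ s t : ℝ, ∀ x : A, α (s + t) x = α s (α t x))
    (hατ : ∀ t : ℝ, ∀ x : A, τ (α t x) = τ x)
    -- β is a trace-preserving *-automorphism making the deformation s-malleable
    (β : A ≃⋆ₐ[ℂ] A)
    (hβτ : ∀ x : A, τ (β x) = τ x)
    (hβM : ∀ x ∈ M, β x = x)
    (hββ : ∀ x : A, β (β x) = x)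
    (hβα : ∀ t : ℝ, ∀ x : A, β (α t x) = α (-t) (β x)) :
    ∀ x ∈ M, ∀ y ∈ M, ∀ t : ℝ,
      traceNorm2 τ ((α t x - E (α t x)) * y - y * (α t x - E (α t x))) ≤
        2 * ‖x‖ * traceNorm2 τ (α t y - y) + traceNorm2 τ (x * y - y * x) :=
  malleable_commutator_estimate_general τ hτpos hτtrace M E hErange hEid hEbimod hEτ α hατ
end

section
/- Let (X, μ) be a standard Borel probability space and g : X → X a bimeasurable bijection with g ∘ g = id which preserves μ. Then there exists a measurable set E ⊆ X with E ⊆ {x ∈ X : g(x) ≠ x}, μ(E ∩ g(E)) = 0, and μ({x ∈ X : g(x) ≠ x} ∖ (E ∪ g(E))) = 0; that is, up to μ-null sets the complement of the fixed-point set of g is partitioned into E and g(E). -/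
open MeasureTheory

/-- Let `(X, μ)` be a standard Borel probability space and `g : X → X` a μ-preserving
bimeasurable bijection with `g ∘ g = id`.  Then, up to μ-null sets, the complement of the
fixed-point set of `g` can be partitioned into a measurable set `E` and its image `g(E)`. -/
theorem involution_halving
    {X : Type*} [MeasurableSpace X] [StandardBorelSpace X]
    (μ : Measure X) [IsProbabilityMeasure μ]
    (g : X ≃ X) (hg : Measurable g) (hg' : Measurable g.symm)
    (hinv : ∀ x, g (g x) = x) (hmp : MeasurePreserving g μ μ) :
    ∃ E : Set X, MeasurableSet E ∧ E ⊆ {x | g x ≠ x} ∧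
      μ (E ∩ g '' E) = 0 ∧ μ ({x | g x ≠ x} \ (E ∪ g '' E)) = 0 := by
  obtain ⟨f, hf⟩ := exists_measurableEmbedding_real X
  refine ⟨{x | f x < f (g x)}, measurableSet_lt hf.measurable (hf.measurable.comp hg), ?_, ?_, ?_⟩
  · intro x hx
    simp only [Set.mem_setOf_eq] at hx ⊢
    intro h
    rw [h] at hx
    exact lt_irrefl _ hx
  · have himg : g '' {x | f x < f (g x)} = {x | f (g x) < f x} := by
      ext y
      constructor
      · rintro ⟨x, hx, rfl⟩
        simpa [hinv x] using hx
      · intro hy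
        exact ⟨g y, by simpa [hinv y] using hy, hinv y⟩
    rw [himg]
    have : {x | f x < f (g x)} ∩ {x | f (g x) < f x} = (∅ : Set X) := by
      ext x
      simp only [Set.mem_inter_iff, Set.mem_setOf_eq, Set.mem_empty_iff_false, iff_false]
      rintro ⟨h1, h2⟩
      exact lt_asymm h1 h2
    rw [this, measure_empty]
  · have himg : g '' {x | f x < f (g x)} = {x | f (g x) < f x} := by
      ext y
      constructor
      · rintro ⟨x, hx, rfl⟩
        simpa [hinv x] using hx
      · intro hy
        exact ⟨g y, by simpa [hinv y] using hy, hinv y⟩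
    rw [himg]
    have : {x | g x ≠ x} \ ({x | f x < f (g x)} ∪ {x | f (g x) < f x}) = (∅ : Set X) := by
      ext x
      simp only [Set.mem_diff, Set.mem_setOf_eq, Set.mem_union, Set.mem_empty_iff_false, iff_false]
      rintro ⟨hne, hnot⟩
      push_neg at hnot
      have : f (g x) = f x := le_antisymm hnot.1 hnot.2
      exact hne (hf.injective this)
    rw [this, measure_empty]
end

section
/- Let (X, μ) be a standard Borel probability space and let R be a countable pmp equivalence relation on X which is strongly ergodic. Then for any sequence of measurable functions fₙ : X → ℂ with |fₙ| ≤ 1 μ-a.e. and ∫ |fₙ(φ(x)) − fₙ(x)|² dμ(x) → 0 as n → ∞ for every φ ∈ [R], one has ∫ |fₙ(x) − ∫ fₙ dμ|² dμ(x) → 0 as n → ∞. -/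
/-!
Splitting into real and imaginary parts, it suffices to treat real `gₙ` with `|gₙ| ≤ 1`. If
their variances do not tend to `0`, pass to a subsequence with variance `≥ ε` and centre it.
By the layer-cake formula, a centred `h` with values in `[-2, 2]` and variance `≥ ε` has a set of
levels `s > 0` of Lebesgue measure `≳ ε` at which both `{h > s}` and `{h ≤ s}` have measure `≳ ε`.
Since `∫ μ {s - r < h ≤ s + r} ds = 2r`, Markov's inequality and a union bound over scales `rₖ`
let us pick such an `s` for which every band `{s - rₖ < h ≤ s + rₖ}` has measure `< cₖ`, for
fixed sequences `rₖ > 0`, `cₖ → 0`. The sets `Eₙ = {hₙ > sₙ}` are then asymptotically invariant: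
`Eₙ \ φ Eₙ` lies in `{|hₙ ∘ φ⁻¹ - hₙ| ≥ rₖ}`, small by Chebyshev, union a band of width `rₖ`,
small by the choice of `sₙ`, which does not depend on `φ`. Strong ergodicity then forces
`μ Eₙ * (1 - μ Eₙ) → 0`, which the bounds on `{hₙ > sₙ}` and `{hₙ ≤ sₙ}` rule out.
-/

open MeasureTheory Filter Topology

/-- `φ` is an element of the full group `[R]`: a bimeasurable bijection of `X` whose graph is
contained in `R`. -/
def IsFullGroupElement {X : Type*} [MeasurableSpace X] (R : X → X → Prop) (φ : X ≃ X) : Prop :=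
  Measurable φ ∧ Measurable φ.symm ∧ ∀ x, R x (φ x)

open Set
open scoped ENNReal

theorem preimage_Ioi_diff_image_subset {X : Type*} (φ : X ≃ X) (h : X → ℝ) (s r : ℝ) :
    h ⁻¹' Ioi s \ φ '' (h ⁻¹' Ioi s)
      ⊆ {x | r ≤ |h (φ.symm x) - h x|} ∪ h ⁻¹' Ioc (s - r) (s + r) := by
  rintro x ⟨hx, hφx⟩
  rw [Equiv.image_eq_preimage_symm, mem_preimage, mem_preimage, mem_Ioi, not_lt] at hφx
  by_cases hd : r ≤ |h (φ.symm x) - h x|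
  · exact Or.inl hd
  · have := (abs_lt.1 (not_le.1 hd)).1
    exact Or.inr ⟨by linarith [mem_Ioi.1 (mem_preimage.1 hx)], by linarith⟩

section

variable {X : Type*} [MeasurableSpace X] {μ : Measure X}

theorem IsFullGroupElement.symm {R : X → X → Prop} (hR : ∀ {x y}, R x y → R y x) {φ : X ≃ X}
    (hφ : IsFullGroupElement R φ) : IsFullGroupElement R φ.symm :=
  ⟨hφ.2.1, by simpa using hφ.1, fun x => hR (by simpa using hφ.2.2 (φ.symm x))⟩

def IsStronglyErgodic (μ : Measure X) (R : X → X → Prop) : Prop :=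
  ∀ E : ℕ → Set X, (∀ n, MeasurableSet (E n)) →
    (∀ φ : X ≃ X, IsFullGroupElement R φ →
      Tendsto (fun n => μ (E n \ φ '' E n)) atTop (𝓝 0)) →
    Tendsto (fun n => μ (E n) * (1 - μ (E n))) atTop (𝓝 0)

def IsAsymptoticallyInvariant {E : Type*} [NormedAddCommGroup E] (μ : Measure X)
    (R : X → X → Prop) (f : ℕ → X → E) : Prop :=
  ∀ φ : X ≃ X, IsFullGroupElement R φ →
    Tendsto (fun n => ∫ x, ‖f n (φ x) - f n x‖ ^ 2 ∂μ) atTop (𝓝 0)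

theorem IsStronglyErgodic.not_forall_tendsto_measure_diff_image [IsProbabilityMeasure μ]
    {R : X → X → Prop} (hSE : IsStronglyErgodic μ R) {E : ℕ → Set X}
    (hE : ∀ n, MeasurableSet (E n)) {a b : ℝ≥0∞} (ha : a ≠ 0) (hb : b ≠ 0)
    (haE : ∀ n, a ≤ μ (E n)) (hbE : ∀ n, b ≤ μ (E n)ᶜ) :
    ¬ ∀ φ : X ≃ X, IsFullGroupElement R φ →
      Tendsto (fun n => μ (E n \ φ '' E n)) atTop (𝓝 0) := fun hinv => by
  have hlow : ∀ n, a * b ≤ μ (E n) * (1 - μ (E n)) := fun n => by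
    rw [← prob_compl_eq_one_sub (hE n)]
    exact mul_le_mul' (haE n) (hbE n)
  exact mul_ne_zero ha hb (nonpos_iff_eq_zero.1 (ge_of_tendsto' (hSE E hE hinv) hlow))

theorem ENNReal.tendsto_nhds_zero_of_le_add {ι κ : Type*} {l : Filter ι} {l' : Filter κ}
    [l'.NeBot] {a : ι → ℝ≥0∞} {b : κ → ι → ℝ≥0∞} {c : κ → ℝ≥0∞}
    (hb : ∀ k, Tendsto (b k) l (𝓝 0)) (hc : Tendsto c l' (𝓝 0))
    (hle : ∀ k n, a n ≤ b k n + c k) : Tendsto a l (𝓝 0) := by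
  refine ENNReal.tendsto_nhds_zero.2 fun δ hδ => ?_
  have hδ2 : 0 < δ / 2 := ENNReal.half_pos hδ.ne'
  obtain ⟨k, hk⟩ := (ENNReal.tendsto_nhds_zero.1 hc _ hδ2).exists
  filter_upwards [ENNReal.tendsto_nhds_zero.1 (hb k) _ hδ2] with n hn
  calc a n ≤ b k n + c k := hle k n
    _ ≤ δ / 2 + δ / 2 := add_le_add hn hk
    _ = δ := ENNReal.add_halves δ

theorem tendstoInMeasure_zero_of_tendsto_integral_norm_sq {ι E : Type*} {l : Filter ι}
    [NormedAddCommGroup E] {d : ι → X → E} (hint : ∀ i, Integrable (fun x => ‖d i x‖ ^ 2) μ)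
    (hd : Tendsto (fun i => ∫ x, ‖d i x‖ ^ 2 ∂μ) l (𝓝 0)) : TendstoInMeasure μ d l 0 := by
  refine tendstoInMeasure_iff_norm.2 fun r hr => ?_
  simp only [Pi.zero_apply, sub_zero]
  have hr2 : ENNReal.ofReal (r ^ 2) ≠ 0 := (ENNReal.ofReal_pos.2 (by positivity)).ne'
  have hchebyshev : ∀ i, μ {x | r ≤ ‖d i x‖}
      ≤ ENNReal.ofReal (∫ x, ‖d i x‖ ^ 2 ∂μ) / ENNReal.ofReal (r ^ 2) := fun i => by
    calc μ {x | r ≤ ‖d i x‖}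
        ≤ μ {x | ENNReal.ofReal (r ^ 2) ≤ ENNReal.ofReal (‖d i x‖ ^ 2)} :=
          measure_mono fun x hx => ENNReal.ofReal_le_ofReal (pow_le_pow_left₀ hr.le hx 2)
      _ ≤ (∫⁻ x, ENNReal.ofReal (‖d i x‖ ^ 2) ∂μ) / ENNReal.ofReal (r ^ 2) :=
          meas_ge_le_lintegral_div (hint i).aemeasurable.ennreal_ofReal hr2 ENNReal.ofReal_ne_top
      _ = _ := by
          rw [ofReal_integral_eq_lintegral_ofReal (hint i) (ae_of_all _ fun x => by positivity)]
  have hbound : Tendsto (fun i => ENNReal.ofReal (∫ x, ‖d i x‖ ^ 2 ∂μ) / ENNReal.ofReal (r ^ 2))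
      l (𝓝 0) := by
    simpa using ENNReal.Tendsto.div_const (ENNReal.tendsto_ofReal hd) (Or.inr hr2)
  exact tendsto_of_tendsto_of_tendsto_of_le_of_le tendsto_const_nhds hbound
    (fun _ => zero_le) hchebyshev

theorem integrable_norm_comp_sub_sq [IsFiniteMeasure μ] {E : Type*} [NormedAddCommGroup E]
    {f : X → E} (hf : AEStronglyMeasurable f μ) {C : ℝ} (hC : ∀ᵐ x ∂μ, ‖f x‖ ≤ C)
    {φ : X → X} (hφ : MeasurePreserving φ μ μ) :
    Integrable (fun x => ‖f (φ x) - f x‖ ^ 2) μ := by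
  refine Integrable.of_bound (((hf.comp_measurePreserving hφ).sub hf).norm.pow 2) ((C + C) ^ 2) ?_
  filter_upwards [hφ.quasiMeasurePreserving.ae hC, hC] with x hφx hx
  rw [Real.norm_of_nonneg (by positivity)]
  exact pow_le_pow_left₀ (norm_nonneg _) ((norm_sub_le _ _).trans (add_le_add hφx hx)) 2

theorem measurableSet_setOf_mem_Ioc_sub_add {h : X → ℝ} (hh : Measurable h) (r : ℝ) :
    MeasurableSet {p : ℝ × X | h p.2 ∈ Ioc (p.1 - r) (p.1 + r)} :=
  (measurableSet_lt (measurable_fst.sub_const r) (hh.comp measurable_snd)).inter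
    (measurableSet_le (hh.comp measurable_snd) (measurable_fst.add_const r))

theorem measurable_measure_preimage_Ioc_sub_add [SFinite μ] {h : X → ℝ} (hh : Measurable h)
    (r : ℝ) : Measurable fun s => μ (h ⁻¹' Ioc (s - r) (s + r)) :=
  measurable_measure_prodMk_left (measurableSet_setOf_mem_Ioc_sub_add hh r)

theorem lintegral_measure_preimage_Ioc_sub_add [SFinite μ] {h : X → ℝ} (hh : Measurable h)
    (r : ℝ) : ∫⁻ s, μ (h ⁻¹' Ioc (s - r) (s + r)) = ENNReal.ofReal (2 * r) * μ univ := by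
  have hS := measurableSet_setOf_mem_Ioc_sub_add hh r
  have hsection : ∀ x, volume ((fun s => (s, x)) ⁻¹' {p : ℝ × X | h p.2 ∈ Ioc (p.1 - r) (p.1 + r)})
      = ENNReal.ofReal (2 * r) := fun x => by
    have : (fun s => (s, x)) ⁻¹' {p : ℝ × X | h p.2 ∈ Ioc (p.1 - r) (p.1 + r)}
        = Ico (h x - r) (h x + r) := by
      ext s
      simp only [mem_preimage, mem_ofPred_eq, mem_Ioc, mem_Ico]
      constructor <;> rintro ⟨h1, h2⟩ <;> constructor <;> linarith
    rw [this, Real.volume_Ico]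
    ring_nf
  calc ∫⁻ s, μ (h ⁻¹' Ioc (s - r) (s + r))
      = (volume.prod μ) {p : ℝ × X | h p.2 ∈ Ioc (p.1 - r) (p.1 + r)} :=
        (Measure.prod_apply hS).symm
    _ = ENNReal.ofReal (2 * r) * μ univ := by
        rw [Measure.prod_apply_symm hS, lintegral_congr hsection, lintegral_const]

theorem volume_setOf_exists_le_measure_preimage_Ioc [SFinite μ] {h : X → ℝ}
    (hh : Measurable h) {r : ℕ → ℝ} {c : ℕ → ℝ≥0∞} (hc : ∀ k, c k ≠ 0) (hc' : ∀ k, c k ≠ ∞) :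
    volume {s | ∃ k, c k ≤ μ (h ⁻¹' Ioc (s - r k) (s + r k))}
      ≤ ∑' k, ENNReal.ofReal (2 * r k) * μ univ / c k := by
  rw [ofPred_exists]
  refine (measure_iUnion_le _).trans (ENNReal.tsum_le_tsum fun k => ?_)
  rw [← lintegral_measure_preimage_Ioc_sub_add hh]
  exact meas_ge_le_lintegral_div
    (measurable_measure_preimage_Ioc_sub_add hh (r k)).aemeasurable (hc k) (hc' k)

theorem ofReal_integral_sq_le_four_mul_lintegral_ofReal [IsFiniteMeasure μ] {h : X → ℝ}
    (hh : AEStronglyMeasurable h μ) (hb : ∀ᵐ x ∂μ, |h x| ≤ 2) (h0 : ∫ x, h x ∂μ = 0) :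
    ENNReal.ofReal (∫ x, h x ^ 2 ∂μ) ≤ 4 * ∫⁻ x, ENNReal.ofReal (h x) ∂μ := by
  have hint : Integrable h μ := Integrable.of_bound hh 2 hb
  have hint_sq : Integrable (fun x => h x ^ 2) μ :=
    Integrable.of_bound (hh.pow 2) 4 (hb.mono fun x hx => by
      rw [Real.norm_eq_abs, abs_pow]; nlinarith [abs_nonneg (h x)])
  have hpos_eq_neg : ∫⁻ x, ENNReal.ofReal (h x) ∂μ = ∫⁻ x, ENNReal.ofReal (-h x) ∂μ := by
    rw [integral_eq_lintegral_pos_part_sub_lintegral_neg_part hint, sub_eq_zero] at h0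
    exact (ENNReal.toReal_eq_toReal_iff' hint.lintegral_lt_top.ne
      hint.neg.lintegral_lt_top.ne).1 h0
  have hpointwise : ∀ᵐ x ∂μ, ENNReal.ofReal (h x ^ 2)
      ≤ 2 * (ENNReal.ofReal (h x) + ENNReal.ofReal (-h x)) := by
    filter_upwards [hb] with x hx
    rw [abs_le] at hx
    rcases le_total 0 (h x) with hx0 | hx0
    · rw [ENNReal.ofReal_of_nonpos (neg_nonpos.2 hx0), add_zero, ← ENNReal.ofReal_ofNat,
        ← ENNReal.ofReal_mul zero_le_two]
      exact ENNReal.ofReal_le_ofReal (by nlinarith)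
    · rw [ENNReal.ofReal_of_nonpos hx0, zero_add, ← ENNReal.ofReal_ofNat,
        ← ENNReal.ofReal_mul zero_le_two]
      exact ENNReal.ofReal_le_ofReal (by nlinarith)
  calc ENNReal.ofReal (∫ x, h x ^ 2 ∂μ) = ∫⁻ x, ENNReal.ofReal (h x ^ 2) ∂μ :=
        ofReal_integral_eq_lintegral_ofReal hint_sq (ae_of_all _ fun x => sq_nonneg _)
    _ ≤ ∫⁻ x, 2 * (ENNReal.ofReal (h x) + ENNReal.ofReal (-h x)) ∂μ := lintegral_mono_ae hpointwise
    _ = 2 * (∫⁻ x, ENNReal.ofReal (h x) ∂μ + ∫⁻ x, ENNReal.ofReal (-h x) ∂μ) := by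
        rw [lintegral_const_mul' _ _ ENNReal.ofNat_ne_top,
          lintegral_add_left' hint.aemeasurable.ennreal_ofReal]
    _ = 4 * ∫⁻ x, ENNReal.ofReal (h x) ∂μ := by
        rw [← hpos_eq_neg]
        ring

theorem lintegral_ofReal_le_mul_measure_preimage_Ioi {h : X → ℝ} (hh : Measurable h) {L : ℝ}
    (hb : ∀ᵐ x ∂μ, h x ≤ L) :
    ∫⁻ x, ENNReal.ofReal (h x) ∂μ ≤ ENNReal.ofReal L * μ (h ⁻¹' Ioi 0) := by
  rw [← lintegral_indicator_const (hh measurableSet_Ioi)]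
  refine lintegral_mono_ae (hb.mono fun x hx => ?_)
  by_cases hx0 : 0 < h x
  · rw [indicator_of_mem (show x ∈ h ⁻¹' Ioi 0 from hx0)]
    exact ENNReal.ofReal_le_ofReal hx
  · rw [ENNReal.ofReal_of_nonpos (not_lt.1 hx0)]
    exact zero_le

theorem lintegral_ofReal_eq_setLIntegral_measure_preimage_Ioi {h : X → ℝ} (hh : Measurable h) :
    ∫⁻ x, ENNReal.ofReal (h x) ∂μ = ∫⁻ s in Ioi 0, μ (h ⁻¹' Ioi s) := by
  have := lintegral_eq_lintegral_meas_lt μ (ae_of_all _ fun x => le_max_right (h x) 0)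
    (hh.max measurable_const).aemeasurable
  simp only [ENNReal.ofReal_max, ENNReal.ofReal_zero, max_zero] at this
  rw [this]
  refine setLIntegral_congr_fun measurableSet_Ioi fun s hs => ?_
  congr 1
  ext x
  simp [(mem_Ioi.1 hs).not_gt]

theorem exists_mem_Ioo_notMem_le_measure_preimage_Ioi [IsProbabilityMeasure μ] {h : X → ℝ}
    (hh : Measurable h) {L : ℝ} (hb : ∀ᵐ x ∂μ, h x ≤ L) {B : Set ℝ} {a : ℝ≥0∞}
    (hB : volume B + a * ENNReal.ofReal L < ∫⁻ x, ENNReal.ofReal (h x) ∂μ) :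
    ∃ s ∈ Ioo 0 L, s ∉ B ∧ a ≤ μ (h ⁻¹' Ioi s) := by
  by_contra! hsmall
  have hpointwise : ∀ s ∈ Ioi (0 : ℝ),
      μ (h ⁻¹' Ioi s) ≤ B.indicator 1 s + (Iio L).indicator (fun _ => a) s := fun s hs => by
    by_cases hsB : s ∈ B
    · rw [indicator_of_mem hsB]
      exact le_add_right prob_le_one
    by_cases hsL : s < L
    · rw [indicator_of_mem (mem_Iio.2 hsL)]
      exact le_add_left (hsmall s ⟨hs, hsL⟩ hsB).le
    · rw [measure_mono_null (fun x hx => ?_) (ae_iff.1 hb)]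
      · exact zero_le
      · exact fun hxL => hsL ((mem_preimage.1 hx).trans_le hxL)
  refine hB.not_ge ?_
  calc ∫⁻ x, ENNReal.ofReal (h x) ∂μ = ∫⁻ s in Ioi 0, μ (h ⁻¹' Ioi s) :=
        lintegral_ofReal_eq_setLIntegral_measure_preimage_Ioi hh
    _ ≤ ∫⁻ s in Ioi 0, (B.indicator 1 s + (Iio L).indicator (fun _ => a) s) :=
        lintegral_mono_ae (ae_restrict_of_forall_mem measurableSet_Ioi hpointwise)
    _ = (∫⁻ s in Ioi 0, B.indicator 1 s) + a * volume (Iio L ∩ Ioi 0) := by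
        rw [lintegral_add_right _ (measurable_const.indicator measurableSet_Iio),
          setLIntegral_indicator measurableSet_Iio, setLIntegral_const]
    _ ≤ volume B + a * ENNReal.ofReal L := by
        rw [inter_comm, Ioi_inter_Iio, Real.volume_Ioo, sub_zero]
        exact add_le_add
          ((setLIntegral_le_lintegral _ _).trans (lintegral_indicator_one_le B)) le_rfl

theorem exists_level_measure_preimage_Ioc_lt [IsProbabilityMeasure μ] {h : X → ℝ}
    (hh : Measurable h) (hb : ∀ᵐ x ∂μ, |h x| ≤ 2) (h0 : ∫ x, h x ∂μ = 0) {ε : ℝ}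
    (hε : ε ≤ ∫ x, h x ^ 2 ∂μ) {r : ℕ → ℝ} {c : ℕ → ℝ≥0∞} (hc : ∀ k, c k ≠ 0)
    (hc' : ∀ k, c k ≠ ∞) (hrc : ∑' k, ENNReal.ofReal (2 * r k) / c k < ENNReal.ofReal (ε / 8)) :
    ∃ s, ENNReal.ofReal (ε / 16) ≤ μ (h ⁻¹' Ioi s) ∧ ENNReal.ofReal (ε / 8) ≤ μ (h ⁻¹' Iic s) ∧
      ∀ k, μ (h ⁻¹' Ioc (s - r k) (s + r k)) < c k := by
  have hε0 : 0 < ε := by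
    have := ENNReal.ofReal_pos.1 (zero_le.trans_lt hrc)
    linarith
  have hquarter : ∀ {u : X → ℝ}, Measurable u → (∀ᵐ x ∂μ, |u x| ≤ 2) → ∫ x, u x ∂μ = 0 →
      ε ≤ ∫ x, u x ^ 2 ∂μ → ENNReal.ofReal (ε / 8) + ENNReal.ofReal (ε / 8)
        ≤ ∫⁻ x, ENNReal.ofReal (u x) ∂μ := fun hu hub hu0 huε => by
    rw [← ENNReal.ofReal_add (by positivity) (by positivity), show ε / 8 + ε / 8 = ε / 4 by ring,
      ENNReal.ofReal_div_of_pos four_pos, ENNReal.ofReal_ofNat, ENNReal.div_le_iff_le_mul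
        (Or.inl four_ne_zero) (Or.inl ENNReal.ofNat_ne_top), mul_comm]
    exact (ENNReal.ofReal_le_ofReal huε).trans
      (ofReal_integral_sq_le_four_mul_lintegral_ofReal hu.aestronglyMeasurable hub hu0)
  set B := {s | ∃ k, c k ≤ μ (h ⁻¹' Ioc (s - r k) (s + r k))}
  have hB : volume B < ENNReal.ofReal (ε / 8) := by
    refine (volume_setOf_exists_le_measure_preimage_Ioc hh hc hc').trans_lt ?_
    simpa using hrc
  obtain ⟨s, hs, hsB, hsμ⟩ := exists_mem_Ioo_notMem_le_measure_preimage_Ioi hh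
    (hb.mono fun x hx => (abs_le.1 hx).2) (B := B) (a := ENNReal.ofReal (ε / 16)) <| by
      rw [← ENNReal.ofReal_mul (by positivity), show ε / 16 * 2 = ε / 8 by ring]
      exact (ENNReal.add_lt_add_right ENNReal.ofReal_ne_top hB).trans_le (hquarter hh hb h0 hε)
  refine ⟨s, hsμ, ?_, fun k => not_le.1 fun hk => hsB ⟨k, hk⟩⟩
  have hneg := hquarter (u := fun x => -h x) hh.neg (by simpa only [abs_neg] using hb)
    (by rw [integral_neg, h0, neg_zero]) (by simpa only [neg_sq] using hε)
  have hlower := hneg.trans (lintegral_ofReal_le_mul_measure_preimage_Ioi hh.neg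
    (hb.mono fun x hx => neg_le.1 (abs_le.1 hx).1))
  calc ENNReal.ofReal (ε / 8) ≤ μ ((fun x => -h x) ⁻¹' Ioi 0) := by
        rw [← two_mul, ENNReal.ofReal_ofNat] at hlower
        exact (ENNReal.mul_le_mul_iff_right two_ne_zero ENNReal.ofNat_ne_top).1 hlower
    _ ≤ μ (h ⁻¹' Iic s) := measure_mono fun x hx => by
        simp only [mem_preimage, mem_Ioi, mem_Iic, neg_pos] at hx ⊢
        linarith [hs.1]

theorem exists_pos_tendsto_zero_tsum_ofReal_div_lt {δ : ℝ≥0∞} (hδ : δ ≠ 0) :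
    ∃ (r : ℕ → ℝ) (c : ℕ → ℝ≥0∞), (∀ k, 0 < r k) ∧ (∀ k, c k ≠ 0) ∧ (∀ k, c k ≠ ∞) ∧
      Tendsto c atTop (𝓝 0) ∧ ∑' k, ENNReal.ofReal (2 * r k) / c k < δ := by
  obtain ⟨e, he, hsum⟩ := ENNReal.exists_pos_sum_of_countable hδ ℕ
  -- with `r = e² / 2` and `c = e`, the `k`-th summand is `e k`
  refine ⟨fun k => (e k : ℝ) ^ 2 / 2, fun k => e k, fun k => by have := he k; positivity,
    fun k => ENNReal.coe_ne_zero.2 (he k).ne', fun k => ENNReal.coe_ne_top,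
    ENNReal.tendsto_atTop_zero_of_tsum_ne_top hsum.ne_top, ?_⟩
  convert hsum using 3 with k
  rw [mul_div_cancel₀ _ two_ne_zero, ← NNReal.coe_pow, ENNReal.ofReal_coe_nnreal, sq,
    ENNReal.coe_mul, ENNReal.mul_div_cancel_right (ENNReal.coe_ne_zero.2 (he k).ne')
      ENNReal.coe_ne_top]

theorem tendsto_measure_preimage_Ioi_diff_image {h : ℕ → X → ℝ} {φ : X ≃ X}
    (hd : TendstoInMeasure μ (fun n x => h n (φ.symm x) - h n x) atTop 0) {s r : ℕ → ℝ}
    {c : ℕ → ℝ≥0∞} (hr : ∀ k, 0 < r k) (hc : Tendsto c atTop (𝓝 0))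
    (hband : ∀ n k, μ (h n ⁻¹' Ioc (s n - r k) (s n + r k)) ≤ c k) :
    Tendsto (fun n => μ (h n ⁻¹' Ioi (s n) \ φ '' (h n ⁻¹' Ioi (s n)))) atTop (𝓝 0) := by
  rw [tendstoInMeasure_iff_norm] at hd
  refine ENNReal.tendsto_nhds_zero_of_le_add (fun k => hd (r k) (hr k)) hc fun k n => ?_
  calc μ (h n ⁻¹' Ioi (s n) \ φ '' (h n ⁻¹' Ioi (s n)))
      ≤ μ ({x | r k ≤ |h n (φ.symm x) - h n x|} ∪ h n ⁻¹' Ioc (s n - r k) (s n + r k)) :=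
        measure_mono (preimage_Ioi_diff_image_subset φ (h n) (s n) (r k))
    _ ≤ _ := (measure_union_le _ _).trans (add_le_add (by simp) (hband n k))

namespace IsAsymptoticallyInvariant

variable {E F : Type*} [NormedAddCommGroup E] [NormedAddCommGroup F] {R : X → X → Prop}
  {f : ℕ → X → E}

theorem comp_tendsto (hf : IsAsymptoticallyInvariant μ R f) {ns : ℕ → ℕ}
    (hns : Tendsto ns atTop atTop) : IsAsymptoticallyInvariant μ R fun j => f (ns j) :=
  fun φ hφ => (hf φ hφ).comp hns

theorem sub_const (hf : IsAsymptoticallyInvariant μ R f) (m : ℕ → E) :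
    IsAsymptoticallyInvariant μ R fun n x => f n x - m n := by
  simpa only [IsAsymptoticallyInvariant, sub_sub_sub_cancel_right] using hf

theorem comp_lipschitzWith (hf : IsAsymptoticallyInvariant μ R f) {u : E → F}
    (hu : LipschitzWith 1 u)
    (hint : ∀ φ, IsFullGroupElement R φ → ∀ n, Integrable (fun x => ‖f n (φ x) - f n x‖ ^ 2) μ) :
    IsAsymptoticallyInvariant μ R fun n x => u (f n x) := fun φ hφ => by
  refine squeeze_zero (fun n => integral_nonneg fun x => by positivity)
    (fun n => integral_mono_of_nonneg (ae_of_all _ fun x => by positivity) (hint φ hφ n)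
      (ae_of_all _ fun x => ?_)) (hf φ hφ)
  simpa using pow_le_pow_left₀ (norm_nonneg _) (hu.norm_sub_le (f n (φ x)) (f n x)) 2

theorem tendstoInMeasure [IsFiniteMeasure μ] (hf : IsAsymptoticallyInvariant μ R f)
    (hpmp : ∀ φ, IsFullGroupElement R φ → MeasurePreserving φ μ μ)
    (hfm : ∀ n, AEStronglyMeasurable (f n) μ) {C : ℝ} (hfC : ∀ n, ∀ᵐ x ∂μ, ‖f n x‖ ≤ C)
    {φ : X ≃ X} (hφ : IsFullGroupElement R φ) :
    TendstoInMeasure μ (fun n x => f n (φ x) - f n x) atTop 0 :=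
  tendstoInMeasure_zero_of_tendsto_integral_norm_sq
    (fun n => integrable_norm_comp_sub_sq (hfm n) (hfC n) (hpmp φ hφ)) (hf φ hφ)

end IsAsymptoticallyInvariant

theorem IsStronglyErgodic.tendsto_integral_sub_integral_sq [IsProbabilityMeasure μ]
    {R : X → X → Prop} (hR : ∀ {x y}, R x y → R y x)
    (hpmp : ∀ φ, IsFullGroupElement R φ → MeasurePreserving φ μ μ)
    (hSE : IsStronglyErgodic μ R) {g : ℕ → X → ℝ} (hgm : ∀ n, Measurable (g n))
    (hgb : ∀ n, ∀ᵐ x ∂μ, |g n x| ≤ 1) (hg : IsAsymptoticallyInvariant μ R g) :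
    Tendsto (fun n => ∫ x, (g n x - ∫ y, g n y ∂μ) ^ 2 ∂μ) atTop (𝓝 0) := by
  refine tendsto_order.2 ⟨fun a ha => Eventually.of_forall fun n =>
    ha.trans_le (integral_nonneg fun _ => sq_nonneg _), fun ε hε => ?_⟩
  by_contra hfreq
  obtain ⟨ns, hns, hvar⟩ := extraction_of_frequently_atTop
    ((not_eventually.1 hfreq).mono fun _ => not_lt.1)
  set h : ℕ → X → ℝ := fun j x => g (ns j) x - ∫ y, g (ns j) y ∂μ
  have hhm : ∀ j, Measurable (h j) := fun j => (hgm (ns j)).sub_const _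
  have hhb : ∀ j, ∀ᵐ x ∂μ, |h j x| ≤ 2 := fun j => by
    have hmean : |∫ y, g (ns j) y ∂μ| ≤ 1 := by
      simpa using norm_integral_le_of_norm_le_const (f := g (ns j)) (hgb (ns j))
    filter_upwards [hgb (ns j)] with x hx
    linarith [abs_sub (g (ns j) x) (∫ y, g (ns j) y ∂μ)]
  have hh0 : ∀ j, ∫ x, h j x ∂μ = 0 := fun j => by
    rw [integral_sub (Integrable.of_bound (hgm (ns j)).aestronglyMeasurable 1 (hgb (ns j)))
      (integrable_const _), integral_const, probReal_univ, one_smul, sub_self]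
  obtain ⟨r, c, hr, hc0, hctop, hc, hrc⟩ := exists_pos_tendsto_zero_tsum_ofReal_div_lt
    (ENNReal.ofReal_pos.2 (by positivity : 0 < ε / 8)).ne'
  choose s hsIoi hsIic hsband using fun j =>
    exists_level_measure_preimage_Ioc_lt (hhm j) (hhb j) (hh0 j) (hvar j) hc0 hctop hrc
  refine hSE.not_forall_tendsto_measure_diff_image (a := ENNReal.ofReal (ε / 16))
    (b := ENNReal.ofReal (ε / 8)) (fun j => hhm j measurableSet_Ioi)
    (ENNReal.ofReal_pos.2 (by positivity)).ne' (ENNReal.ofReal_pos.2 (by positivity)).ne'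
    hsIoi (fun j => by rw [← preimage_compl, compl_Ioi]; exact hsIic j) fun φ hφ => ?_
  have hinv : IsAsymptoticallyInvariant μ R h :=
    (hg.comp_tendsto hns.tendsto_atTop).sub_const fun j => ∫ y, g (ns j) y ∂μ
  have hdiff := hinv.tendstoInMeasure hpmp (fun j => (hhm j).aestronglyMeasurable) hhb (hφ.symm hR)
  exact tendsto_measure_preimage_Ioi_diff_image hdiff hr hc fun j k => (hsband j k).le

theorem integral_norm_sub_integral_sq_eq_re_add_im [IsFiniteMeasure μ] {f : X → ℂ}
    (hf : MemLp f 2 μ) :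
    ∫ x, ‖f x - ∫ y, f y ∂μ‖ ^ 2 ∂μ = ∫ x, ((f x).re - ∫ y, (f y).re ∂μ) ^ 2 ∂μ
      + ∫ x, ((f x).im - ∫ y, (f y).im ∂μ) ^ 2 ∂μ := by
  have hint := hf.integrable one_le_two
  have hre : Integrable (fun x => ((f x).re - ∫ y, (f y).re ∂μ) ^ 2) μ :=
    (hf.re.sub (memLp_const _)).integrable_sq
  have him : Integrable (fun x => ((f x).im - ∫ y, (f y).im ∂μ) ^ 2) μ :=
    (hf.im.sub (memLp_const _)).integrable_sq
  have hre_int : ∫ y, (f y).re ∂μ = (∫ y, f y ∂μ).re := integral_re hint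
  have him_int : ∫ y, (f y).im ∂μ = (∫ y, f y ∂μ).im := integral_im hint
  rw [← integral_add hre him, hre_int, him_int]
  congr with x
  rw [Complex.sq_norm, Complex.normSq_apply, Complex.sub_re, Complex.sub_im]
  ring

end

theorem strongly_ergodic_asymptotically_invariant_functions_general
    {X : Type*} [MeasurableSpace X]
    (μ : Measure X) [IsProbabilityMeasure μ]
    -- R is a countable pmp equivalence relation with measurable graph
    (R : X → X → Prop) (hR : Equivalence R)
    (hpmp : ∀ φ : X ≃ X, IsFullGroupElement R φ → MeasurePreserving φ μ μ)
    -- R is strongly ergodic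
    (hSE : ∀ E : ℕ → Set X, (∀ n, MeasurableSet (E n)) →
      (∀ φ : X ≃ X, IsFullGroupElement R φ →
        Tendsto (fun n => μ (E n \ φ '' E n)) atTop (𝓝 0)) →
      Tendsto (fun n => μ (E n) * (1 - μ (E n))) atTop (𝓝 0)) :
    ∀ f : ℕ → X → ℂ, (∀ n, Measurable (f n)) → (∀ n, ∀ᵐ x ∂μ, ‖f n x‖ ≤ 1) →
      (∀ φ : X ≃ X, IsFullGroupElement R φ →
        Tendsto (fun n => ∫ x, ‖f n (φ x) - f n x‖ ^ 2 ∂μ) atTop (𝓝 0)) →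
      Tendsto (fun n => ∫ x, ‖f n x - ∫ y, f n y ∂μ‖ ^ 2 ∂μ) atTop (𝓝 0) := by
  intro f hfm hfb hf
  have hint : ∀ φ, IsFullGroupElement R φ → ∀ n,
      Integrable (fun x => ‖f n (φ x) - f n x‖ ^ 2) μ := fun φ hφ n =>
    integrable_norm_comp_sub_sq (hfm n).aestronglyMeasurable (hfb n) (hpmp φ hφ)
  have hre := IsStronglyErgodic.tendsto_integral_sub_integral_sq hR.symm hpmp hSE
    (fun n => Complex.measurable_re.comp (hfm n))
    (fun n => (hfb n).mono fun x hx => (Complex.abs_re_le_norm _).trans hx)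
    (IsAsymptoticallyInvariant.comp_lipschitzWith hf RCLike.lipschitzWith_re hint)
  have him := IsStronglyErgodic.tendsto_integral_sub_integral_sq hR.symm hpmp hSE
    (fun n => Complex.measurable_im.comp (hfm n))
    (fun n => (hfb n).mono fun x hx => (Complex.abs_im_le_norm _).trans hx)
    (IsAsymptoticallyInvariant.comp_lipschitzWith hf RCLike.lipschitzWith_im hint)
  simpa [integral_norm_sub_integral_sq_eq_re_add_im
    (MemLp.of_bound (hfm _).aestronglyMeasurable 1 (hfb _))] using hre.add him

/-- Let `R` be a strongly ergodic countable pmp equivalence relation on a standard Borel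
probability space `(X, μ)`.  Then for any sequence of measurable functions `fₙ : X → ℂ` with
`|fₙ| ≤ 1` a.e. and `∫ |fₙ ∘ φ − fₙ|² dμ → 0` for every `φ ∈ [R]`, one has
`∫ |fₙ − ∫ fₙ dμ|² dμ → 0`. -/
theorem strongly_ergodic_asymptotically_invariant_functions
    {X : Type*} [MeasurableSpace X] [StandardBorelSpace X]
    (μ : Measure X) [IsProbabilityMeasure μ]
    -- R is a countable pmp equivalence relation with measurable graph
    (R : X → X → Prop) (hR : Equivalence R)
    (hgraph : MeasurableSet {p : X × X | R p.1 p.2})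
    (hcount : ∀ x, {y | R x y}.Countable)
    (hpmp : ∀ φ : X ≃ X, IsFullGroupElement R φ → MeasurePreserving φ μ μ)
    -- R is strongly ergodic
    (hSE : ∀ E : ℕ → Set X, (∀ n, MeasurableSet (E n)) →
      (∀ φ : X ≃ X, IsFullGroupElement R φ →
        Tendsto (fun n => μ (E n \ φ '' E n)) atTop (𝓝 0)) →
      Tendsto (fun n => μ (E n) * (1 - μ (E n))) atTop (𝓝 0)) :
    ∀ f : ℕ → X → ℂ, (∀ n, Measurable (f n)) → (∀ n, ∀ᵐ x ∂μ, ‖f n x‖ ≤ 1) →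
      (∀ φ : X ≃ X, IsFullGroupElement R φ →
        Tendsto (fun n => ∫ x, ‖f n (φ x) - f n x‖ ^ 2 ∂μ) atTop (𝓝 0)) →
      Tendsto (fun n => ∫ x, ‖f n x - ∫ y, f n y ∂μ‖ ^ 2 ∂μ) atTop (𝓝 0) :=
  strongly_ergodic_asymptotically_invariant_functions_general μ R hR hpmp hSE
end

section
/- Let R be the orbit equivalence relation of an action of a countable group Γ on (X, μ) by μ-preserving bimeasurable bijections (so [x] = Γ·x for all x), let π be an orthogonal representation of R on the trivial Hilbert bundle with fiber H, and let b be a 1-cocycle for π. Suppose F ⊆ X is measurable and ξ : F → H is measurable with the property that for μ-a.e. x ∈ F, b(x, y) = ξ(x) − π(x, y)ξ(y) for every y ∈ [x] ∩ F. Let F̃ = ⋃_{g ∈ Γ} g(F) be the R-saturation of F. Then there exists a measurable map ξ̃ : F̃ → H such that ξ̃ = ξ μ-a.e. on F and, for μ-a.e. x ∈ F̃, b(x, y) = ξ̃(x) − π(x, y)ξ̃(y) for every y ∈ [x]. -/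
/-!
On the saturation every point `x` is related to some `u ∈ F`, and the coboundary equation forces
`ξ' x = b x u + π x u (ξ u)`. At a point where the cocycle and multiplicativity identities hold
and `ξ` trivializes `b` along the class, this value does not depend on `u`, and it satisfies the
coboundary equation. Taking `u = g x` for the first `g` in an enumeration of `Γ` with `g x ∈ F`
makes `ξ'` measurable; since `Γ` is countable and acts by measure-preserving maps, the points
whose whole class is good still have full measure.
-/

open MeasureTheory Filter TopologicalSpace
open scoped InnerProductSpace

section Measurability

variable {α : Type*} [MeasurableSpace α]

theorem measurable_of_forall_measurable_dist {E : Type*} [PseudoMetricSpace E]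
    [SeparableSpace E] [MeasurableSpace E] [BorelSpace E] {f : α → E}
    (hf : ∀ v, Measurable fun x => dist (f x) v) : Measurable f := by
  rcases isEmpty_or_nonempty α with hα | ⟨⟨x₀⟩⟩
  · exact measurable_of_empty f
  have : Nonempty E := ⟨f x₀⟩
  classical
  let w := denseSeq E
  have hclose : ∀ (k : ℕ) x, ∃ n, dist (f x) (w n) < 1 / (k + 1) := fun k x =>
    (denseRange_denseSeq E).exists_dist_lt (f x) Nat.one_div_pos_of_nat
  -- `f` is the pointwise limit of the first `1/(k+1)`-approximations from the dense sequence
  refine measurable_of_tendsto_metrizable (f := fun k x => w (Nat.find (hclose k x)))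
    (fun k => Measurable.find (fun n => measurable_const)
      (fun n => measurableSet_lt (hf (w n)) measurable_const) (hclose k)) ?_
  refine tendsto_pi_nhds.2 fun x => tendsto_iff_dist_tendsto_zero.2 ?_
  refine squeeze_zero (fun _ => dist_nonneg) (fun k => ?_) tendsto_one_div_add_atTop_nhds_zero_nat
  rw [dist_comm]
  exact (Nat.find_spec (hclose k x)).le

section InnerProductSpace

variable {E : Type*} [NormedAddCommGroup E] [InnerProductSpace ℝ E]

theorem norm_le_iff_forall_inner_le_of_denseRange {ι : Type*} {w : ι → E} (hw : DenseRange w)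
    {u : E} {q : ℝ} (hq : 0 ≤ q) : ‖u‖ ≤ q ↔ ∀ i, ⟪u, w i⟫_ℝ ≤ q * ‖w i‖ := by
  refine ⟨fun hu i => (real_inner_le_norm u (w i)).trans
    (mul_le_mul_of_nonneg_right hu (norm_nonneg _)), fun h => ?_⟩
  have hclosed : IsClosed {z : E | ⟪u, z⟫_ℝ ≤ q * ‖z‖} :=
    isClosed_le (continuous_const.inner continuous_id) (continuous_const.mul continuous_norm)
  have hu : ⟪u, u⟫_ℝ ≤ q * ‖u‖ :=
    hclosed.closure_subset_iff.2 (Set.range_subset_iff.2 h) (hw u)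
  rw [real_inner_self_eq_norm_mul_norm] at hu
  nlinarith [norm_nonneg u]

variable [SeparableSpace E]

theorem measurable_norm_of_forall_measurable_inner {f : α → E}
    (hf : ∀ w, Measurable fun x => ⟪f x, w⟫_ℝ) : Measurable fun x => ‖f x‖ := by
  have : Nonempty E := ⟨0⟩
  let w := denseSeq E
  refine measurable_of_Iic fun q => ?_
  by_cases hq : 0 ≤ q
  · have hset : (fun x => ‖f x‖) ⁻¹' Set.Iic q = ⋂ n, {x | ⟪f x, w n⟫_ℝ ≤ q * ‖w n‖} := by
      ext x
      simpa using norm_le_iff_forall_inner_le_of_denseRange (denseRange_denseSeq E) hq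
    rw [hset]
    exact MeasurableSet.iInter fun n => measurableSet_le (hf (w n)) measurable_const
  · convert MeasurableSet.empty
    ext x
    simpa using (lt_of_not_ge hq).trans_le (norm_nonneg (f x))

variable [MeasurableSpace E] [BorelSpace E]

theorem measurable_of_forall_measurable_inner {f : α → E}
    (hf : ∀ w, Measurable fun x => ⟪f x, w⟫_ℝ) : Measurable f := by
  refine measurable_of_forall_measurable_dist fun v => ?_
  simp_rw [dist_eq_norm]
  exact measurable_norm_of_forall_measurable_inner fun w => by
    simpa only [inner_sub_left] using (hf w).sub_const _

end InnerProductSpace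

theorem Measurable.apply_of_continuous {E F : Type*} [TopologicalSpace E] [MetrizableSpace E]
    [MeasurableSpace E] [SecondCountableTopology E] [OpensMeasurableSpace E]
    [TopologicalSpace F] [PseudoMetrizableSpace F] [MeasurableSpace F] [BorelSpace F]
    {T : α → E → F} (hT : ∀ x, Continuous (T x)) (hTm : ∀ v, Measurable fun x => T x v)
    {f : α → E} (hf : Measurable f) : Measurable fun x => T x (f x) :=
  (measurable_uncurry_of_continuous_of_measurable (u := fun v x => T x v) hT hTm).comp
    (hf.prodMk measurable_id)

theorem exists_measurable_of_countable_cover {β ι : Type*} [Countable ι] [Nonempty ι]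
    [MeasurableSpace β] {s : ι → Set α} (hs : ∀ i, MeasurableSet (s i)) {g : ι → α → β}
    (hg : ∀ i, Measurable (g i)) :
    ∃ f : α → β, Measurable f ∧ ∀ x ∈ ⋃ i, s i, ∃ i, x ∈ s i ∧ f x = g i x := by
  classical
  obtain ⟨e, he⟩ := exists_surjective_nat ι
  have hfirst : ∀ x, ∃ n, x ∈ s (e n) ∨ x ∉ ⋃ i, s i := fun x => by
    by_cases hx : x ∈ ⋃ i, s i
    · obtain ⟨i, hi⟩ := Set.mem_iUnion.1 hx
      obtain ⟨n, rfl⟩ := he i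
      exact ⟨n, .inl hi⟩
    · exact ⟨0, .inr hx⟩
  refine ⟨fun x => g (e (Nat.find (hfirst x))) x,
    Measurable.find (p := fun n x => x ∈ s (e n) ∨ x ∉ ⋃ i, s i) (fun n => hg (e n))
      (fun n => (hs _).union (MeasurableSet.iUnion hs).compl) hfirst,
    fun x hx => ⟨_, (Nat.find_spec (hfirst x)).resolve_right (not_not.2 hx), rfl⟩⟩

end Measurability

section Orbit

variable {X Γ : Type*} {a : Γ → X → X} {R : X → X → Prop}

theorem equivalence_of_orbit [Group Γ] (haone : ∀ x, a 1 x = x)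
    (hamul : ∀ g h : Γ, ∀ x, a (g * h) x = a g (a h x)) (hR : ∀ x y, R x y ↔ ∃ g, y = a g x) :
    Equivalence R where
  refl x := (hR x x).2 ⟨1, (haone x).symm⟩
  symm {x y} hxy := by
    obtain ⟨g, rfl⟩ := (hR x y).1 hxy
    exact (hR _ _).2 ⟨g⁻¹, by rw [← hamul, inv_mul_cancel, haone]⟩
  trans {x y z} hxy hyz := by
    obtain ⟨g, rfl⟩ := (hR x y).1 hxy
    obtain ⟨h, rfl⟩ := (hR _ z).1 hyz
    exact (hR _ _).2 ⟨h * g, (hamul h g x).symm⟩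

theorem mem_iUnion_image_iff_exists_rel (hR : ∀ x y, R x y ↔ ∃ g, y = a g x) {F : Set X}
    {x : X} : x ∈ ⋃ g, a g '' F ↔ ∃ u ∈ F, R u x := by
  simp only [Set.mem_iUnion, Set.mem_image, hR]
  exact ⟨fun ⟨g, u, hu, hx⟩ => ⟨u, hu, g, hx.symm⟩, fun ⟨u, hu, g, hx⟩ => ⟨g, u, hu, hx.symm⟩⟩

theorem ae_forall_rel_of_ae [Countable Γ] [MeasurableSpace X] {μ : Measure X}
    (ha : ∀ g, Measure.QuasiMeasurePreserving (a g) μ μ) (hR : ∀ x y, R x y ↔ ∃ g, y = a g x)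
    {P : X → Prop} (hP : ∀ᵐ x ∂μ, P x) : ∀ᵐ x ∂μ, ∀ y, R x y → P y := by
  filter_upwards [ae_all_iff.2 fun g => (ha g).ae hP] with x hx y hxy
  obtain ⟨g, rfl⟩ := (hR x y).1 hxy
  exact hx g

end Orbit

section Cocycle

variable {X H : Type*} [NormedAddCommGroup H] [InnerProductSpace ℝ H] {R : X → X → Prop}
  {π : X → X → H ≃ₗᵢ[ℝ] H} {b : X → X → H} {F : Set X} {ξ : X → H}

theorem cocycle_eq_sub_of_transport (hR : Equivalence R) {x : X}
    (hπ : ∀ y z, R x y → R y z → ∀ v, π x y (π y z v) = π x z v)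
    (hb : ∀ y z, R x y → R y z → b x z = b x y + π x y (b y z)) {y u w : X}
    (hxy : R x y) (hxu : R x u) (hyw : R y w)
    (hξu : ∀ z, R u z → z ∈ F → b u z = ξ u - π u z (ξ z)) (hw : w ∈ F) :
    b x y = (b x u + π x u (ξ u)) - π x y (b y w + π y w (ξ w)) := by
  have huw : R u w := hR.trans (hR.trans (hR.symm hxu) hxy) hyw
  have hbw : b x w = b x u + π x u (ξ u) - π x w (ξ w) := by
    rw [hb u w hxu huw, hξu w huw hw, map_sub, hπ u w hxu huw]
    abel
  have hπb : π x y (b y w) = b x w - b x y := by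
    rw [hb y w hxy hyw]
    abel
  rw [map_add, hπb, hπ y w hxy hyw, hbw]
  abel

end Cocycle

section Representation

variable {X H : Type*} [MeasurableSpace X] [NormedAddCommGroup H] [InnerProductSpace ℝ H]
  [SeparableSpace H] [MeasurableSpace H] [BorelSpace H] {R : X → X → Prop}
  {π : X → X → H ≃ₗᵢ[ℝ] H}

theorem measurable_representation_apply
    (hπmeas : ∀ v w : H, Measurable fun p : {p : X × X // R p.1 p.2} =>
      (inner ℝ (π p.1.1 p.1.2 v) w : ℝ))
    {f : X → X} (hf : Measurable f) (hRf : ∀ x, R x (f x)) {v : X → H} (hv : Measurable v) :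
    Measurable fun x => π x (f x) (v x) := by
  have hgraph : Measurable fun x => (⟨(x, f x), hRf x⟩ : {p : X × X // R p.1 p.2}) :=
    (measurable_id.prodMk hf).subtype_mk
  exact hv.apply_of_continuous (T := fun x => π x (f x)) (fun x => (π x (f x)).continuous)
    fun v => measurable_of_forall_measurable_inner fun w => (hπmeas v w).comp hgraph

theorem exists_measurable_transport {Γ : Type*} [Countable Γ] [Nonempty Γ] {a : Γ → X → X}
    (ha : ∀ g, Measurable (a g)) (hR : ∀ x y, R x y ↔ ∃ g, y = a g x)
    (hπmeas : ∀ v w : H, Measurable fun p : {p : X × X // R p.1 p.2} =>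
      (inner ℝ (π p.1.1 p.1.2 v) w : ℝ))
    {b : X → X → H} (hbmeas : Measurable fun p : {p : X × X // R p.1 p.2} => b p.1.1 p.1.2)
    {F : Set X} (hF : MeasurableSet F) {ξ : X → H} (hξmeas : Measurable fun x : F => ξ x) :
    ∃ ξ' : X → H, Measurable ξ' ∧
      ∀ x u, u ∈ F → R x u → ∃ w ∈ F, R x w ∧ ξ' x = b x w + π x w (ξ w) := by
  have hRa : ∀ g x, R x (a g x) := fun g x => (hR _ _).2 ⟨g, rfl⟩
  have hξF : Measurable (F.indicator ξ) :=
    measurable_of_restrict_of_restrict_compl hF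
      (by convert hξmeas using 1; ext ⟨x, hx⟩; exact Set.indicator_of_mem hx ξ)
      (by convert measurable_const (a := (0 : H)) using 1; ext ⟨x, hx⟩
          exact Set.indicator_of_notMem hx ξ)
  obtain ⟨ξ', hmeas, hξ'⟩ := exists_measurable_of_countable_cover (s := fun g => a g ⁻¹' F)
    (fun g => ha g hF) (g := fun g x => b x (a g x) + π x (a g x) (F.indicator ξ (a g x)))
    fun g => (hbmeas.comp ((measurable_id.prodMk (ha g)).subtype_mk (h := hRa g))).add
      (measurable_representation_apply hπmeas (ha g) (hRa g) (hξF.comp (ha g)))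
  refine ⟨ξ', hmeas, fun x u hu hxu => ?_⟩
  obtain ⟨g, rfl⟩ := (hR x u).1 hxu
  obtain ⟨h, hh, hx⟩ := hξ' x (Set.mem_iUnion.2 ⟨g, hu⟩)
  exact ⟨a h x, hh, hRa h x, by rw [hx, Set.indicator_of_mem (show a h x ∈ F from hh)]⟩

end Representation

theorem coboundary_extension_to_saturation_general
    {X : Type*} [MeasurableSpace X]
    (μ : Measure X)
    -- a countable group Γ acts on (X, μ) by μ-preserving bimeasurable bijections
    {Γ : Type*} [Group Γ] [Countable Γ]
    (a : Γ → X ≃ X)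
    (hameas : ∀ g : Γ, Measurable (a g) ∧ Measurable (a g).symm)
    (haone : ∀ x, a 1 x = x)
    (hamul : ∀ g h : Γ, ∀ x, a (g * h) x = a g (a h x))
    (hamp : ∀ g : Γ, MeasurePreserving (a g) μ μ)
    -- R is the orbit equivalence relation of the action
    (R : X → X → Prop)
    (hR : ∀ x y, R x y ↔ ∃ g : Γ, y = a g x)
    -- H is a separable real Hilbert space
    {H : Type*} [NormedAddCommGroup H] [InnerProductSpace ℝ H]
    [TopologicalSpace.SeparableSpace H] [MeasurableSpace H] [BorelSpace H]
    -- π is an orthogonal representation of R on the trivial bundle with fiber H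
    (π : X → X → (H ≃ₗᵢ[ℝ] H))
    (hπmeas : ∀ v w : H, Measurable fun p : {p : X × X // R p.1 p.2} =>
      (inner ℝ (π p.1.1 p.1.2 v) w : ℝ))
    (hπmul : ∀ᵐ x ∂μ, ∀ y z, R x y → R y z → ∀ v, π x y (π y z v) = π x z v)
    -- b is a 1-cocycle for π
    (b : X → X → H)
    (hbmeas : Measurable fun p : {p : X × X // R p.1 p.2} => b p.1.1 p.1.2)
    (hbcocycle : ∀ᵐ x ∂μ, ∀ y z, R x y → R y z → b x z = b x y + π x y (b y z))
    -- F is measurable and ξ : F → H is a measurable map trivializing b on R restricted to F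
    (F : Set X) (hF : MeasurableSet F)
    (ξ : X → H) (hξmeas : Measurable fun x : F => ξ x)
    (hξ : ∀ᵐ x ∂μ, x ∈ F → ∀ y, R x y → y ∈ F → b x y = ξ x - π x y (ξ y)) :
    ∃ ξ' : X → H,
      (Measurable fun x : (⋃ g : Γ, (a g) '' F) => ξ' x) ∧
      (∀ᵐ x ∂μ, x ∈ F → ξ' x = ξ x) ∧
      (∀ᵐ x ∂μ, x ∈ (⋃ g : Γ, (a g) '' F) →
        ∀ y, R x y → b x y = ξ' x - π x y (ξ' y)) := by
  have hReq : Equivalence R := equivalence_of_orbit haone hamul hR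
  obtain ⟨ξ', hξ'meas, hξ'⟩ :=
    exists_measurable_transport (fun g => (hameas g).1) hR hπmeas hbmeas hF hξmeas
  have hgood := ae_forall_rel_of_ae (fun g => (hamp g).quasiMeasurePreserving) hR
    (hπmul.and (hbcocycle.and hξ))
  refine ⟨ξ', hξ'meas.comp measurable_subtype_coe, ?_, ?_⟩
  · filter_upwards [hξ] with x hξx hx
    obtain ⟨u, hu, hxu, hξ'x⟩ := hξ' x x hx (hReq.refl x)
    rw [hξ'x, hξx hx u hxu hu]
    abel
  · filter_upwards [hgood] with x hx hxF y hxy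
    obtain ⟨u, hu, hux⟩ := (mem_iUnion_image_iff_exists_rel hR).1 hxF
    obtain ⟨v, hv, hxv, hξ'x⟩ := hξ' x u hu (hReq.symm hux)
    obtain ⟨w, hw, hyw, hξ'y⟩ := hξ' y u hu (hReq.trans (hReq.symm hxy) (hReq.symm hux))
    obtain ⟨hπx, hbx, -⟩ := hx x (hReq.refl x)
    rw [hξ'x, hξ'y]
    exact cocycle_eq_sub_of_transport hReq hπx hbx hxy hxv hyw ((hx v hxv).2.2 hv) hw

/-- Let `R` be the orbit equivalence relation of a μ-preserving action of a countable group
`Γ` on `(X, μ)` by bimeasurable bijections, `π` an orthogonal representation of `R` on the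
trivial Hilbert bundle with fiber `H`, and `b` a 1-cocycle for `π`.  If `ξ : F → H` is a
measurable map on a measurable set `F ⊆ X` with `b(x, y) = ξ(x) − π(x, y)ξ(y)` for a.e.
`x ∈ F` and all `y ∈ [x] ∩ F`, then `ξ` extends to a measurable map `ξ̃` on the R-saturation
`F̃ = ⋃_{g ∈ Γ} g(F)` with `b(x, y) = ξ̃(x) − π(x, y)ξ̃(y)` for a.e. `x ∈ F̃` and all
`y ∈ [x]`. -/
theorem coboundary_extension_to_saturation
    {X : Type*} [MeasurableSpace X] [StandardBorelSpace X]
    (μ : Measure X) [IsProbabilityMeasure μ]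
    -- a countable group Γ acts on (X, μ) by μ-preserving bimeasurable bijections
    {Γ : Type*} [Group Γ] [Countable Γ]
    (a : Γ → X ≃ X)
    (hameas : ∀ g : Γ, Measurable (a g) ∧ Measurable (a g).symm)
    (haone : ∀ x, a 1 x = x)
    (hamul : ∀ g h : Γ, ∀ x, a (g * h) x = a g (a h x))
    (hamp : ∀ g : Γ, MeasurePreserving (a g) μ μ)
    -- R is the orbit equivalence relation of the action
    (R : X → X → Prop)
    (hR : ∀ x y, R x y ↔ ∃ g : Γ, y = a g x)
    -- H is a separable real Hilbert space
    {H : Type*} [NormedAddCommGroup H] [InnerProductSpace ℝ H] [CompleteSpace H]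
    [TopologicalSpace.SeparableSpace H] [MeasurableSpace H] [BorelSpace H]
    -- π is an orthogonal representation of R on the trivial bundle with fiber H
    (π : X → X → (H ≃ₗᵢ[ℝ] H))
    (hπmeas : ∀ v w : H, Measurable fun p : {p : X × X // R p.1 p.2} =>
      (inner ℝ (π p.1.1 p.1.2 v) w : ℝ))
    (hπmul : ∀ᵐ x ∂μ, ∀ y z, R x y → R y z → ∀ v, π x y (π y z v) = π x z v)
    -- b is a 1-cocycle for π
    (b : X → X → H)
    (hbmeas : Measurable fun p : {p : X × X // R p.1 p.2} => b p.1.1 p.1.2)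
    (hbcocycle : ∀ᵐ x ∂μ, ∀ y z, R x y → R y z → b x z = b x y + π x y (b y z))
    -- F is measurable and ξ : F → H is a measurable map trivializing b on R restricted to F
    (F : Set X) (hF : MeasurableSet F)
    (ξ : X → H) (hξmeas : Measurable fun x : F => ξ x)
    (hξ : ∀ᵐ x ∂μ, x ∈ F → ∀ y, R x y → y ∈ F → b x y = ξ x - π x y (ξ y)) :
    ∃ ξ' : X → H,
      (Measurable fun x : (⋃ g : Γ, (a g) '' F) => ξ' x) ∧
      (∀ᵐ x ∂μ, x ∈ F → ξ' x = ξ x) ∧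
      (∀ᵐ x ∂μ, x ∈ (⋃ g : Γ, (a g) '' F) →
        ∀ y, R x y → b x y = ξ' x - π x y (ξ' y)) :=
  coboundary_extension_to_saturation_general μ a hameas haone hamul hamp R hR π hπmeas hπmul b
    hbmeas hbcocycle F hF ξ hξmeas hξ
end
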